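/- arXiv:2008.02163 — 7 statements merged into one kernel-verified Lean document; each statement's English description precedes it below -/
import Mathlib

section
/- Let G be a k-connected graph that has no Hamiltonian path. Then the length of a longest path in G is at least 2k. -/
/-- A graph is `k`-connected if it has more than `k` vertices and deleting any set of
fewer than `k` vertices leaves a connected graph. -/
def KConnected {V : Type*} [Fintype V] (G : SimpleGraph V) (k : ℕ) : Prop :=
  k < Fintype.card V ∧
    ∀ S : Set V, S.ncard < k → (G.induce Sᶜ).Connected

/-!
Let `P = v₀ v₁ … v_ℓ` be a longest path. Both ends have all their neighbours on `P`, and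
`k`-connectivity forces minimum degree at least `k`. If some index `i` had `v₀ ~ v_{i+1}` and
`v_ℓ ~ v_i`, then `v₀ … v_i v_ℓ v_{ℓ-1} … v_{i+1} v₀` would be a cycle through all of `P`;
since `G` is connected and `P` is not Hamiltonian, some vertex off `P` is adjacent to this cycle,
giving a path of length `ℓ + 1`. Hence the index sets `{i | v₀ ~ v_{i+1}}` and `{i | v_ℓ ~ v_i}`
are disjoint subsets of `[0, ℓ)`, each of size at least `k`, so `2k ≤ ℓ`.
-/

open Finset

namespace SimpleGraph

variable {V : Type*} {G : SimpleGraph V}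

namespace Walk

lemma exists_getVert_succ_eq_of_ne_start {u v w : V} {P : G.Walk u v} (hw : w ∈ P.support)
    (hwu : w ≠ u) : ∃ i < P.length, P.getVert (i + 1) = w := by
  obtain ⟨n, rfl, hn⟩ := mem_support_iff_exists_getVert.1 hw
  obtain _ | i := n
  · simp at hwu
  · exact ⟨i, hn, rfl⟩

lemma exists_getVert_eq_of_ne_end {u v w : V} {P : G.Walk u v} (hw : w ∈ P.support)
    (hwv : w ≠ v) : ∃ i < P.length, P.getVert i = w := by
  obtain ⟨n, rfl, hn⟩ := mem_support_iff_exists_getVert.1 hw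
  refine ⟨n, lt_of_le_of_ne hn ?_, rfl⟩
  rintro rfl
  simp at hwv

lemma length_eq_of_support_perm {u v a b : V} {P : G.Walk u v} {W : G.Walk a b}
    (h : W.support.Perm P.support) : W.length = P.length := by
  simpa using h.length_eq

lemma IsPath.of_support_perm {u v a b : V} {P : G.Walk u v} {W : G.Walk a b} (hP : P.IsPath)
    (h : W.support.Perm P.support) : W.IsPath :=
  IsPath.mk' (h.nodup_iff.2 hP.support_nodup)

lemma IsPath.mem_support_of_adj_end {u v w : V} {P : G.Walk u v} (hP : P.IsPath)
    (hmax : ∀ (a b : V) (W : G.Walk a b), W.IsPath → W.length ≤ P.length) (h : G.Adj v w) :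
    w ∈ P.support := by
  by_contra hw
  simpa using hmax _ _ _ (hP.concat hw h)

/-- Pósa rotation: `v₀ … v_i v_ℓ v_{ℓ-1} … v_{i+1}` uses the edge `v_ℓ v_i` in place of
`v_i v_{i+1}`. -/
lemma exists_support_perm_of_adj_getVert {u v : V} (P : G.Walk u v) {i : ℕ} (hi : i < P.length)
    (h : G.Adj v (P.getVert i)) : ∃ Q : G.Walk u (P.getVert (i + 1)), Q.support.Perm P.support := by
  induction P generalizing i with
  | nil => simp at hi
  | cons hadj q ih =>
    obtain _ | i := i
    · refine ⟨(cons (by simpa using h.symm) q.reverse).copy rfl (by simp), ?_⟩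
      simpa only [support_copy, support_cons, support_reverse] using (List.reverse_perm _).cons _
    · obtain ⟨Q, hQ⟩ := ih (by simpa using hi) (by simpa using h)
      exact ⟨(cons hadj Q).copy rfl (by simp), by simpa using hQ⟩

lemma exists_support_perm_of_adj [DecidableEq V] {u w y : V} (Q : G.Walk u w) (h : G.Adj w u)
    (hy : y ∈ Q.support) : ∃ (a : V) (W : G.Walk a y), W.support.Perm Q.support := by
  have hy' : y ∈ (cons h Q).support := List.mem_cons_of_mem _ hy
  refine ⟨_, ((cons h Q).rotate y hy').tail, ?_⟩
  rw [support_tail_of_not_nil _ ((nil_rotate hy').not.2 not_nil_cons)]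
  exact (support_rotate _ _ _).perm

lemma exists_support_perm_of_crossing [DecidableEq V] {u v y : V} (P : G.Walk u v) {i : ℕ} (hi : i < P.length)
    (hu : G.Adj u (P.getVert (i + 1))) (hv : G.Adj v (P.getVert i)) (hy : y ∈ P.support) :
    ∃ (a : V) (W : G.Walk a y), W.support.Perm P.support := by
  obtain ⟨Q, hQ⟩ := P.exists_support_perm_of_adj_getVert hi hv
  obtain ⟨a, W, hW⟩ := Q.exists_support_perm_of_adj hu.symm (hQ.mem_iff.2 hy)
  exact ⟨a, W, hW.trans hQ⟩

lemma degree_add_degree_le_length [Fintype V] [DecidableRel G.Adj] {u v : V} (P : G.Walk u v)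
    (hu : ∀ w, G.Adj u w → w ∈ P.support) (hv : ∀ w, G.Adj v w → w ∈ P.support)
    (hcross : ∀ i < P.length, G.Adj u (P.getVert (i + 1)) → ¬ G.Adj v (P.getVert i)) :
    G.degree u + G.degree v ≤ P.length := by
  set A := {i ∈ range P.length | G.Adj u (P.getVert (i + 1))}
  set B := {i ∈ range P.length | G.Adj v (P.getVert i)}
  have hA : G.degree u ≤ #A := by
    rw [← card_neighborFinset_eq_degree]
    refine card_le_card_of_surjOn (fun i ↦ P.getVert (i + 1)) fun w hw ↦ ?_
    rw [mem_coe, mem_neighborFinset] at hw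
    obtain ⟨i, hi, rfl⟩ := exists_getVert_succ_eq_of_ne_start (hu w hw) hw.ne'
    exact ⟨i, by simp [A, hi, hw], rfl⟩
  have hB : G.degree v ≤ #B := by
    rw [← card_neighborFinset_eq_degree]
    refine card_le_card_of_surjOn (fun i ↦ P.getVert i) fun w hw ↦ ?_
    rw [mem_coe, mem_neighborFinset] at hw
    obtain ⟨i, hi, rfl⟩ := exists_getVert_eq_of_ne_end (hv w hw) hw.ne'
    exact ⟨i, by simp [B, hi, hw], rfl⟩
  have hAB : Disjoint A B := disjoint_filter.2 fun i hi ↦ hcross i (mem_range.1 hi)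
  calc G.degree u + G.degree v ≤ #A + #B := add_le_add hA hB
    _ = #(A ∪ B) := (card_union_of_disjoint hAB).symm
    _ ≤ #(range P.length) := card_le_card (union_subset (filter_subset _ _) (filter_subset _ _))
    _ = P.length := card_range _

end Walk

end SimpleGraph

open SimpleGraph

lemma KConnected.connected {V : Type*} [Fintype V] {G : SimpleGraph V} {k : ℕ}
    (h : KConnected G k) (hk : 0 < k) : G.Connected := by
  have := h.2 ∅ (by simpa using hk)
  rw [Set.compl_empty] at this
  exact (induceUnivIso G).connected_iff.1 this

lemma KConnected.le_degree {V : Type*} [Fintype V] {G : SimpleGraph V} [DecidableRel G.Adj]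
    {k : ℕ} (h : KConnected G k) (v : V) : k ≤ G.degree v := by
  by_contra! hlt
  set S := G.neighborSet v
  have hS : S.ncard = G.degree v := by
    rw [← Nat.card_coe_set_eq, Nat.card_eq_fintype_card, card_neighborSet_eq_degree]
  have : Nontrivial ↥Sᶜ := by
    rw [Set.nontrivial_coe_sort, ← Set.one_lt_ncard_iff_nontrivial, Set.ncard_compl, hS, Nat.card_eq_fintype_card]
    have := h.1
    omega
  obtain ⟨w, hw⟩ := (h.2 S (hS ▸ hlt)).preconnected.exists_adj_of_nontrivial
    ⟨v, G.notMem_neighborSet_self⟩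
  exact w.2 hw

/-- Let `G` be a `k`-connected graph that has no Hamiltonian path. Then the
length of a longest path in `G` is at least `2k`. -/
theorem stmt_1 {V : Type*} [Fintype V] [DecidableEq V] {G : SimpleGraph V} (k : ℕ)
    (hconn : KConnected G k)
    (hham : ∀ (u v : V) (W : G.Walk u v), ¬ W.IsHamiltonian)
    {p₁ p₂ : V} (P : G.Walk p₁ p₂) (hP : P.IsPath)
    (hmax : ∀ (u v : V) (W : G.Walk u v), W.IsPath → W.length ≤ P.length) :
    2 * k ≤ P.length := by
  classical
  obtain rfl | hk := Nat.eq_zero_or_pos k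
  · simp
  have hend : ∀ w, G.Adj p₂ w → w ∈ P.support := fun w ↦ hP.mem_support_of_adj_end hmax
  have hstart : ∀ w, G.Adj p₁ w → w ∈ P.support := fun w hw ↦ by
    simpa using hP.reverse.mem_support_of_adj_end (by simpa using hmax) hw
  obtain ⟨u₀, hu₀⟩ : ∃ u₀, u₀ ∉ P.support := by
    by_contra! h
    exact hham _ _ P (hP.isHamiltonian_iff.2 h)
  obtain ⟨W₀⟩ := (hconn.connected hk).preconnected u₀ p₁
  obtain ⟨⟨⟨x, y⟩, hxy⟩, -, hx, hy⟩ :=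
    W₀.exists_boundary_dart {v | v ∉ P.support} hu₀ (by simp)
  have hcross : ∀ i < P.length, G.Adj p₁ (P.getVert (i + 1)) → ¬ G.Adj p₂ (P.getVert i) := by
    intro i hi h₁ h₂
    obtain ⟨a, W, hW⟩ := P.exists_support_perm_of_crossing hi h₁ h₂ (not_not.1 hy)
    have hWmax := Walk.length_eq_of_support_perm hW ▸ hmax
    exact hx (hW.mem_iff.1 ((hP.of_support_perm hW).mem_support_of_adj_end hWmax hxy.symm))
  calc 2 * k ≤ G.degree p₁ + G.degree p₂ := by
        linarith [hconn.le_degree p₁, hconn.le_degree p₂]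
    _ ≤ P.length := P.degree_add_degree_le_length hstart hend hcross
end

section
/- Let G be a k-connected graph on n vertices with k ≥ (n − 2)/3. Then every two longest paths in G intersect in at least k vertices. -/
namespace SimpleGraph.Walk

variable {V : Type*} {G : SimpleGraph V}

lemma exists_eq_append_cons_of_mem_darts {u v : V} {p : G.Walk u v} {d : G.Dart}
    (hd : d ∈ p.darts) :
    ∃ (p₁ : G.Walk u d.fst) (p₂ : G.Walk d.snd v), p = p₁.append (cons d.adj p₂) := by
  induction p with
  | nil => simp at hd
  | cons h q ih =>
    rcases List.mem_cons.mp (darts_cons h q ▸ hd) with rfl | hd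
    · exact ⟨nil, q, rfl⟩
    · obtain ⟨p₁, p₂, rfl⟩ := ih hd
      exact ⟨cons h p₁, p₂, rfl⟩

/-- Writing `p = p₁ ++ (x → y) ++ p₂`, the path `p₂`, then `v → x`, then `p₁` backwards. -/
lemma IsPath.exists_reroute {u v : V} {p : G.Walk u v} (hp : p.IsPath) {d : G.Dart}
    (hd : d ∈ p.darts) (hv : G.Adj v d.fst) :
    ∃ q : G.Walk d.snd u, q.IsPath ∧ q.length = p.length ∧ ∀ x, x ∈ q.support ↔ x ∈ p.support := by
  obtain ⟨p₁, p₂, rfl⟩ := exists_eq_append_cons_of_mem_darts hd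
  have hsupp : (p₂.append (cons hv p₁.reverse)).support = p₂.support ++ p₁.support.reverse := by
    simp [support_append]
  have hsupp' : (p₁.append (cons d.adj p₂)).support = p₁.support ++ p₂.support := by
    simp [support_append]
  refine ⟨p₂.append (cons hv p₁.reverse), ?_, ?_, ?_⟩
  · rw [isPath_def, hsupp]
    rw [isPath_def, hsupp'] at hp
    exact (List.perm_append_comm.trans (p₁.support.reverse_perm.append_right _)).nodup_iff.mpr hp
  · simp only [length_append, length_cons, length_reverse]
    omega
  · simp [hsupp, hsupp', or_comm]

lemma exists_isPath_length_eq_of_tail_nodup {a b : V} (c : G.Walk b b)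
    (hc : c.support.tail.Nodup) (ha : a ∉ c.support) (hab : G.Adj b a) :
    ∃ (x : V) (q : G.Walk x a), q.IsPath ∧ q.length = c.length := by
  cases c with
  | nil => exact ⟨a, nil, .nil, rfl⟩
  | cons h p =>
    refine ⟨_, p.concat hab, (isPath_def p |>.mpr (by simpa using hc)).concat ?_ hab, by simp⟩
    exact fun hap ↦ ha (by simp [hap])

lemma exists_isPath_length_eq_of_adj_mem_support [DecidableEq V] {u a b : V} (c : G.Walk u u)
    (hc : c.support.tail.Nodup) (hb : b ∈ c.support) (ha : a ∉ c.support) (hab : G.Adj b a) :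
    ∃ (x : V) (q : G.Walk x a), q.IsPath ∧ q.length = c.length := by
  obtain ⟨x, q, hq, hlen⟩ := exists_isPath_length_eq_of_tail_nodup (c.rotate b hb)
    ((support_rotate c b hb).nodup_iff.mpr hc) (by simpa using ha) hab
  exact ⟨x, q, hq, by simpa using hlen⟩

lemma exists_mem_darts_adj_adj {u v : V} (p : G.Walk u v)
    (hu : ∀ x, G.Adj u x → x ∈ p.support) (hv : ∀ x, G.Adj v x → x ∈ p.support)
    (hdeg : p.length < (G.neighborSet u).ncard + (G.neighborSet v).ncard) :
    ∃ d ∈ p.darts, G.Adj u d.snd ∧ G.Adj v d.fst := by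
  classical
  -- The neighbours of `u` are heads, those of `v` tails, of distinct darts of `p`; if no dart
  -- served both, `p` would have more than `p.length` darts.
  by_contra! h
  set D := p.darts.toFinset
  have hU : (G.neighborSet u).ncard ≤ (D.filter (fun d ↦ G.Adj u d.snd)).card := by
    refine (Set.ncard_le_ncard (t := ↑((D.filter (fun d ↦ G.Adj u d.snd)).image (·.snd)))
      ?_ (Finset.finite_toSet _)).trans ((Set.ncard_coe_finset _).trans_le Finset.card_image_le)
    intro x hx
    have hx' : x ∈ p.support.tail := by
      rcases p.mem_support_iff.mp (hu x hx) with rfl | h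
      · exact absurd hx G.irrefl
      · exact h
    rw [← map_snd_darts, List.mem_map] at hx'
    obtain ⟨d, hd, rfl⟩ := hx'
    simp only [Finset.coe_image, Finset.coe_filter, Set.mem_image, Set.mem_ofPred_eq]
    exact ⟨d, ⟨List.mem_toFinset.mpr hd, hx⟩, rfl⟩
  have hV : (G.neighborSet v).ncard ≤ (D.filter (fun d ↦ ¬ G.Adj u d.snd)).card := by
    refine (Set.ncard_le_ncard (t := ↑((D.filter (fun d ↦ ¬ G.Adj u d.snd)).image (·.fst)))
      ?_ (Finset.finite_toSet _)).trans ((Set.ncard_coe_finset _).trans_le Finset.card_image_le)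
    intro x hx
    have hx' : x ∈ p.support.dropLast := by
      have := hv x hx
      rw [← dropLast_support_concat, List.mem_append, List.mem_singleton] at this
      rcases this with h | rfl
      · exact h
      · exact absurd hx G.irrefl
    rw [← map_fst_darts, List.mem_map] at hx'
    obtain ⟨d, hd, rfl⟩ := hx'
    simp only [Finset.coe_image, Finset.coe_filter, Set.mem_image, Set.mem_ofPred_eq]
    exact ⟨d, ⟨List.mem_toFinset.mpr hd, fun h' ↦ h d hd h' hx⟩, rfl⟩
  have hsplit := Finset.card_filter_add_card_filter_not (s := D) (fun d ↦ G.Adj u d.snd)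
  have hD : D.card ≤ p.length := p.length_darts ▸ p.darts.toFinset_card_le
  omega

lemma IsPath.ncard_support {u v : V} {p : G.Walk u v} (hp : p.IsPath) :
    {x | x ∈ p.support}.ncard = p.length + 1 := by
  classical
  rw [← p.length_support, ← List.toFinset_card_of_nodup hp.support_nodup, ← Set.ncard_coe_finset]
  congr
  ext
  simp

lemma IsPath.mem_support_of_adj_start_of_isLongest {u v x : V} {p : G.Walk u v} (hp : p.IsPath)
    (hmax : ∀ (a b : V) (q : G.Walk a b), q.IsPath → q.length ≤ p.length) (hx : G.Adj u x) :
    x ∈ p.support := by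
  by_contra hxp
  simpa using hmax _ _ _ ((cons_isPath_iff hx.symm p).mpr ⟨hp, hxp⟩)

lemma IsPath.mem_support_of_adj_end_of_isLongest {u v x : V} {p : G.Walk u v} (hp : p.IsPath)
    (hmax : ∀ (a b : V) (q : G.Walk a b), q.IsPath → q.length ≤ p.length) (hx : G.Adj v x) :
    x ∈ p.support := by
  simpa using hp.reverse.mem_support_of_adj_start_of_isLongest (by simpa using hmax) hx

theorem IsPath.mem_support_of_isLongest_of_length_lt {u v : V} {p : G.Walk u v} (hp : p.IsPath)
    (hmax : ∀ (a b : V) (q : G.Walk a b), q.IsPath → q.length ≤ p.length) (hG : G.Connected)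
    (hdeg : p.length < (G.neighborSet u).ncard + (G.neighborSet v).ncard) (y : V) :
    y ∈ p.support := by
  classical
  by_contra hy
  obtain ⟨d, hd, hud, hvd⟩ := p.exists_mem_darts_adj_adj
    (fun _ ↦ hp.mem_support_of_adj_start_of_isLongest hmax)
    (fun _ ↦ hp.mem_support_of_adj_end_of_isLongest hmax) hdeg
  obtain ⟨q, hq, hqlen, hqsupp⟩ := hp.exists_reroute hd hvd
  obtain ⟨e, -, he_in, he_out⟩ : ∃ e : G.Dart, e ∈ _ ∧ e.fst ∈ p.support ∧ e.snd ∉ p.support :=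
    (hG.preconnected u y).some.exists_boundary_dart {x | x ∈ p.support} p.start_mem_support hy
  obtain ⟨x, r, hr, hrlen⟩ := exists_isPath_length_eq_of_adj_mem_support (cons hud q)
    (by simpa using hq.support_nodup) (by simp [hqsupp, he_in])
    (by simpa [hqsupp, he_out] using fun h : e.snd = u ↦ he_out (h ▸ p.start_mem_support)) e.adj
  simpa [hrlen, hqlen] using hmax _ _ r hr

end SimpleGraph.Walk

namespace KConnected

variable {V : Type*} [Fintype V] {G : SimpleGraph V} {k : ℕ}

lemma connected_s2 (h : KConnected G k) (hk : k ≠ 0) : G.Connected :=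
  G.induceUnivIso.connected_iff.mp <| by
    rw [← Set.compl_empty]
    exact h.2 ∅ (by simpa using Nat.pos_of_ne_zero hk)

/-- Deleting the neighbourhood of `v` isolates `v`, so it must leave nothing else. -/
lemma le_ncard_neighborSet (h : KConnected G k) (v : V) : k ≤ (G.neighborSet v).ncard := by
  by_contra! hlt
  obtain ⟨w, hw⟩ : ∃ w, w ∉ insert v (G.neighborSet v) := by
    by_contra! hall
    have := (Set.ncard_le_ncard (s := Set.univ) (fun w _ ↦ hall w) (Set.toFinite _)).trans
      (Set.ncard_insert_le v (G.neighborSet v))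
    rw [Set.ncard_univ, Nat.card_eq_fintype_card] at this
    have := h.1
    omega
  rw [Set.mem_insert_iff, not_or] at hw
  have hv : v ∈ (G.neighborSet v)ᶜ := by simp
  have : Nontrivial ((G.neighborSet v)ᶜ : Set V) :=
    ⟨⟨⟨v, hv⟩, ⟨w, hw.2⟩, fun hvw ↦ hw.1 (congrArg Subtype.val hvw).symm⟩⟩
  exact (h.2 _ hlt).preconnected.not_isIsolated ⟨v, hv⟩ fun x hx ↦ x.2 hx

end KConnected

/-- Let `G` be a `k`-connected graph on `n` vertices with `k ≥ (n − 2)/3`.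
Then every two longest paths in `G` intersect in at least `k` vertices. -/
theorem stmt_2 {V : Type*} [Fintype V] {G : SimpleGraph V} (k n : ℕ)
    (hn : Fintype.card V = n)
    (hconn : KConnected G k)
    (hk : ((n : ℝ) - 2) / 3 ≤ (k : ℝ))
    {p₁ p₂ q₁ q₂ : V} (P : G.Walk p₁ p₂) (Q : G.Walk q₁ q₂)
    (hP : P.IsPath) (hQ : Q.IsPath)
    (hPmax : ∀ (u v : V) (W : G.Walk u v), W.IsPath → W.length ≤ P.length)
    (hQmax : ∀ (u v : V) (W : G.Walk u v), W.IsPath → W.length ≤ Q.length) :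
    k ≤ ({x | x ∈ P.support} ∩ {x | x ∈ Q.support}).ncard := by
  rcases Nat.eq_zero_or_pos k with rfl | hkpos
  · exact Nat.zero_le _
  have hlen : Q.length = P.length := le_antisymm (hPmax _ _ Q hQ) (hQmax _ _ P hP)
  have hn3 : n ≤ 3 * k + 2 := by
    have : (n : ℝ) ≤ 3 * k + 2 := by linarith
    exact_mod_cast this
  have hcardV : Nat.card V = n := Nat.card_eq_fintype_card.trans hn
  have hPcard := hP.ncard_support
  have hQcard := hQ.ncard_support
  by_cases hshort : P.length + 1 ≤ 2 * k
  · have hspan : {x | x ∈ P.support} = Set.univ := Set.eq_univ_of_forall <|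
      hP.mem_support_of_isLongest_of_length_lt hPmax (hconn.connected_s2 hkpos.ne') <| by
        linarith [hconn.le_ncard_neighborSet p₁, hconn.le_ncard_neighborSet p₂]
    rw [hspan, Set.ncard_univ] at hPcard
    rw [hspan, Set.univ_inter]
    have := hconn.1
    omega
  · have := Set.ncard_union_add_ncard_inter {x | x ∈ P.support} {x | x ∈ Q.support}
    have := Set.ncard_le_card ({x | x ∈ P.support} ∪ {x | x ∈ Q.support})
    omega
end

section
/- Let P and Q be two longest paths in a graph G. Let u be a vertex in V(P) ∩ V(Q). Let v be a vertex in V(P) \ V(Q) such that the subpath P[u,v] of P between u and v is internally disjoint from Q, and let w be a vertex in V(Q) \ V(P) such that the subpath Q[u,w] of Q between u and w is internally disjoint from P. Then there is no path in G from v to w that is internally disjoint from both P and Q. -/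
/-!
Let `R` be the `v`–`w` path. Following `P[u,v]` and then `R` gives a `u`–`w` path internally
disjoint from `Q`; substituting it for the segment `Q[u,w]` of `Q` gives a path, so since `Q` is
longest, `|P[u,v]| + |R| ≤ |Q[u,w]|`. Symmetrically `|Q[u,w]| + |R| ≤ |P[u,v]|`, so `R` is trivial
and `v = w`, which is impossible as `w ∈ V(Q)` and `v ∉ V(Q)`. The segment `Q[u,w]` is only given
as a path along edges of `Q`; its length is still determined, since such a path moves
monotonically along `Q`.
-/

namespace SimpleGraph.Walk

variable {V : Type*} {G : SimpleGraph V}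

section Position

variable [DecidableEq V] {a b : V} {Q : G.Walk a b}

lemma IsPath.idxOf_getVert (hQ : Q.IsPath) {i : ℕ} (hi : i ≤ Q.length) :
    Q.support.idxOf (Q.getVert i) = i := by
  rw [Q.getVert_eq_support_getElem hi]
  exact hQ.support_nodup.idxOf_getElem i _

lemma IsPath.idxOf_eq_succ_or_of_mem_edges (hQ : Q.IsPath) {x y : V} (hxy : s(x, y) ∈ Q.edges) :
    Q.support.idxOf y = Q.support.idxOf x + 1 ∨ Q.support.idxOf x = Q.support.idxOf y + 1 := by
  obtain ⟨i, hi, he⟩ := Q.mk_mem_edges_iff_exists.1 hxy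
  have h₀ := hQ.idxOf_getVert hi.le
  have h₁ := hQ.idxOf_getVert (i := i + 1) hi
  rcases Sym2.eq_iff.1 he with ⟨rfl, rfl⟩ | ⟨rfl, rfl⟩ <;> omega

/-- `W` moves monotonically along `Q`: a change of direction would make it revisit the vertex it
has just left. -/
lemma IsPath.idxOf_getVert_of_edges_subset (hQ : Q.IsPath) {u w : V} {W : G.Walk u w}
    (hW : W.IsPath) (hWQ : ∀ e ∈ W.edges, e ∈ Q.edges) (hu : u ∈ Q.support) :
    (∀ i ≤ W.length, Q.support.idxOf (W.getVert i) = Q.support.idxOf u + i) ∨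
      ∀ i ≤ W.length, Q.support.idxOf (W.getVert i) + i = Q.support.idxOf u := by
  induction W with
  | nil => simp
  | @cons u x w hux W ih =>
    obtain ⟨hW, huW⟩ := cons_isPath_iff hux W |>.1 hW
    have hxQ : s(u, x) ∈ Q.edges := hWQ _ (by simp)
    have ih := ih hW (fun e he ↦ hWQ e (by simp [he])) (Q.snd_mem_support_of_mem_edges hxQ)
    have hturn : 1 ≤ W.length → Q.support.idxOf (W.getVert 1) ≠ Q.support.idxOf u :=
      fun _ h ↦ huW ((List.idxOf_inj hu).1 h.symm ▸ W.getVert_mem_support 1)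
    have hstep := hQ.idxOf_eq_succ_or_of_mem_edges hxQ
    rw [length_cons]
    rcases hstep with hstep | hstep <;> [left; right] <;>
    · rintro (_ | i) hi
      · simp
      rw [getVert_cons_succ]
      rcases ih with ih | ih <;> · have := ih i (by omega); have := ih 1; omega

lemma IsPath.length_eq_of_edges_subset (hQ : Q.IsPath) {u w : V} {W₁ W₂ : G.Walk u w}
    (hW₁ : W₁.IsPath) (hW₂ : W₂.IsPath) (hW₁Q : ∀ e ∈ W₁.edges, e ∈ Q.edges)
    (hW₂Q : ∀ e ∈ W₂.edges, e ∈ Q.edges) (hu : u ∈ Q.support) : W₁.length = W₂.length := by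
  have h₁ := hQ.idxOf_getVert_of_edges_subset hW₁ hW₁Q hu
  have h₂ := hQ.idxOf_getVert_of_edges_subset hW₂ hW₂Q hu
  rcases h₁ with h₁ | h₁ <;> rcases h₂ with h₂ | h₂ <;>
  · have e₁ := h₁ _ le_rfl
    have e₂ := h₂ _ le_rfl
    rw [getVert_length] at e₁ e₂
    omega

end Position

lemma mem_support_of_edges_subset {a b u v x : V} {W : G.Walk u v} {Q : G.Walk a b}
    (hWQ : ∀ e ∈ W.edges, e ∈ Q.edges) (hv : v ∈ Q.support) (hx : x ∈ W.support) :
    x ∈ Q.support := by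
  rcases mem_support_iff_exists_mem_edges.1 hx with rfl | ⟨e, he, hxe⟩
  · exact hv
  · exact Q.mem_support_of_mem_edges (hWQ e he) hxe

lemma isPath_append_iff {u v w : V} {p : G.Walk u v} {q : G.Walk v w} :
    (p.append q).IsPath ↔ p.IsPath ∧ q.IsPath ∧ ∀ x ∈ p.support, x ∈ q.support → x = v := by
  rw [isPath_def, isPath_def, isPath_def, support_append, ← q.cons_tail_support]
  simp only [List.nodup_append, List.nodup_cons, List.tail_cons, List.mem_cons]
  constructor
  · rintro ⟨hp, hq, hpq⟩
    exact ⟨hp, ⟨fun hv ↦ hpq v p.end_mem_support v hv rfl, hq⟩,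
      fun x hx hx' ↦ hx'.resolve_right fun hxq ↦ hpq x hx x hxq rfl⟩
  · rintro ⟨hp, ⟨hv, hq⟩, hpq⟩
    refine ⟨hp, hq, ?_⟩
    rintro x hx _ hy rfl
    exact hv (hpq x hx (.inr hy) ▸ hy)

lemma exists_eq_append_append_or_reverse {a b u w : V} {Q : G.Walk a b} (hu : u ∈ Q.support)
    (hw : w ∈ Q.support) :
    (∃ (T : G.Walk a u) (M : G.Walk u w) (D : G.Walk w b), Q = T.append (M.append D)) ∨
      ∃ (T : G.Walk b u) (M : G.Walk u w) (D : G.Walk w a), Q.reverse = T.append (M.append D) := by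
  obtain ⟨T, D, rfl⟩ := mem_support_iff_exists_append.1 hu
  rcases (mem_support_append_iff _ _).1 hw with hwT | hwD
  · obtain ⟨T₁, M, rfl⟩ := mem_support_iff_exists_append.1 hwT
    exact .inr ⟨D.reverse, M.reverse, T₁.reverse, by simp [reverse_append, append_assoc]⟩
  · obtain ⟨M, D₂, rfl⟩ := mem_support_iff_exists_append.1 hwD
    exact .inl ⟨T, M, D₂, rfl⟩

def IsLongestPath {a b : V} (Q : G.Walk a b) : Prop :=
  Q.IsPath ∧ ∀ (x y : V) (W : G.Walk x y), W.IsPath → W.length ≤ Q.length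

lemma IsLongestPath.reverse {a b : V} {Q : G.Walk a b} (hQ : Q.IsLongestPath) :
    Q.reverse.IsLongestPath :=
  ⟨hQ.1.reverse, by simpa using hQ.2⟩

lemma IsLongestPath.length_le_of_append_append {a b u w : V} {T : G.Walk a u} {M : G.Walk u w}
    {D : G.Walk w b} (hQ : (T.append (M.append D)).IsLongestPath) {X : G.Walk u w}
    (hX : X.IsPath)
    (hXQ : ∀ x ∈ X.support, x ≠ u → x ≠ w → x ∉ (T.append (M.append D)).support) :
    X.length ≤ M.length := by
  obtain ⟨hT, hMD, hTMD⟩ := isPath_append_iff.1 hQ.1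
  obtain ⟨-, hD, hMD⟩ := isPath_append_iff.1 hMD
  have hTXD : (T.append (X.append D)).IsPath := by
    refine isPath_append_iff.2 ⟨hT, isPath_append_iff.2 ⟨hX, hD, fun x hxX hxD ↦ ?_⟩,
      fun x hxT hx ↦ ?_⟩
    · by_contra hxw
      by_cases hxu : x = u
      · exact hxw (hMD x (hxu ▸ M.start_mem_support) hxD)
      · exact hXQ x hxX hxu hxw (by simp [mem_support_append_iff, hxD])
    · rcases (mem_support_append_iff _ _).1 hx with hxX | hxD
      · by_contra hxu
        by_cases hxw : x = w
        · exact hxu (hTMD x hxT (by simp [mem_support_append_iff, hxw]))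
        · exact hXQ x hxX hxu hxw (by simp [mem_support_append_iff, hxT])
      · exact hTMD x hxT (by simp [mem_support_append_iff, hxD])
  have := hQ.2 _ _ _ hTXD
  simp only [length_append] at this
  omega

lemma IsLongestPath.length_le_of_internallyDisjoint {a b u w : V} {Q : G.Walk a b}
    (hQ : Q.IsLongestPath) (hu : u ∈ Q.support) (hw : w ∈ Q.support) {Quw : G.Walk u w}
    (hQuw : Quw.IsPath) (hQuwQ : ∀ e ∈ Quw.edges, e ∈ Q.edges) {X : G.Walk u w}
    (hX : X.IsPath) (hXQ : ∀ x ∈ X.support, x ≠ u → x ≠ w → x ∉ Q.support) :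
    X.length ≤ Quw.length := by
  classical
  wlog hdec : ∃ (T : G.Walk a u) (M : G.Walk u w) (D : G.Walk w b), Q = T.append (M.append D)
    generalizing a b Q
  · refine this hQ.reverse (by simpa using hu) (by simpa using hw) (by simpa using hQuwQ)
      (by simpa using hXQ) ?_
    exact (exists_eq_append_append_or_reverse hu hw).resolve_left hdec
  obtain ⟨T, M, D, rfl⟩ := hdec
  have hM : M.IsPath := hQ.1.of_append_right.of_append_left
  rw [← hQ.1.length_eq_of_edges_subset hM hQuw (by simp +contextual) hQuwQ hu]
  exact hQ.length_le_of_append_append hX hXQ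

/-- `S` followed by `R` is a `u`–`w` path internally disjoint from `Q`. -/
lemma IsLongestPath.length_add_length_le {p₁ p₂ q₁ q₂ u v w : V} {P : G.Walk p₁ p₂}
    {Q : G.Walk q₁ q₂} (hQ : Q.IsLongestPath) (huQ : u ∈ Q.support) (hvP : v ∈ P.support)
    (hvQ : v ∉ Q.support) (hwQ : w ∈ Q.support) (hwP : w ∉ P.support) {S : G.Walk u v}
    (hS : S.IsPath) (hSP : ∀ e ∈ S.edges, e ∈ P.edges)
    (hSQ : ∀ x ∈ S.support, x ≠ u → x ≠ v → x ∉ Q.support)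
    {Quw : G.Walk u w} (hQuw : Quw.IsPath) (hQuwQ : ∀ e ∈ Quw.edges, e ∈ Q.edges)
    {R : G.Walk v w} (hR : R.IsPath)
    (hRPQ : ∀ x ∈ R.support, x ≠ v → x ≠ w → x ∉ P.support ∧ x ∉ Q.support) :
    S.length + R.length ≤ Quw.length := by
  have hSR : ∀ x ∈ S.support, x ∈ R.support → x = v := by
    intro x hxS hxR
    by_contra hxv
    by_cases hxw : x = w
    · exact hwP (hxw ▸ mem_support_of_edges_subset hSP hvP hxS)
    · exact (hRPQ x hxR hxv hxw).1 (mem_support_of_edges_subset hSP hvP hxS)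
  have hSRQ : ∀ x ∈ (S.append R).support, x ≠ u → x ≠ w → x ∉ Q.support := by
    intro x hx hxu hxw
    by_cases hxv : x = v
    · exact hxv ▸ hvQ
    rcases (mem_support_append_iff _ _).1 hx with hxS | hxR
    · exact hSQ x hxS hxu hxv
    · exact (hRPQ x hxR hxv hxw).2
  simpa using hQ.length_le_of_internallyDisjoint huQ hwQ hQuw hQuwQ
    (isPath_append_iff.2 ⟨hS, hR, hSR⟩) hSRQ

end SimpleGraph.Walk

/-- Let `P` and `Q` be two longest paths in a graph `G`. Let `u ∈ V(P) ∩ V(Q)`,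
let `v ∈ V(P) \ V(Q)` be such that the subpath `P[u,v]` of `P` is internally disjoint from
`Q`, and let `w ∈ V(Q) \ V(P)` be such that the subpath `Q[u,w]` of `Q` is internally
disjoint from `P`. Then there is no path in `G` from `v` to `w` that is internally disjoint
from both `P` and `Q`.

The subpath `P[u,v]` is formalized as a path from `u` to `v` all of whose edges are edges
of `P` (in a path this uniquely determines the subpath between two of its vertices). -/
theorem stmt_7 {V : Type*} {G : SimpleGraph V}
    {p₁ p₂ q₁ q₂ : V} (P : G.Walk p₁ p₂) (Q : G.Walk q₁ q₂)
    (hP : P.IsPath) (hQ : Q.IsPath)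
    (hPmax : ∀ (a b : V) (W : G.Walk a b), W.IsPath → W.length ≤ P.length)
    (hQmax : ∀ (a b : V) (W : G.Walk a b), W.IsPath → W.length ≤ Q.length)
    {u v w : V}
    (huP : u ∈ P.support) (huQ : u ∈ Q.support)
    (hvP : v ∈ P.support) (hvQ : v ∉ Q.support)
    (hwQ : w ∈ Q.support) (hwP : w ∉ P.support)
    (Puv : G.Walk u v) (hPuv : Puv.IsPath) (hPuvSub : ∀ e ∈ Puv.edges, e ∈ P.edges)
    (hPuvInt : ∀ x ∈ Puv.support, x ≠ u → x ≠ v → x ∉ Q.support)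
    (Quw : G.Walk u w) (hQuw : Quw.IsPath) (hQuwSub : ∀ e ∈ Quw.edges, e ∈ Q.edges)
    (hQuwInt : ∀ x ∈ Quw.support, x ≠ u → x ≠ w → x ∉ P.support) :
    ¬ ∃ R : G.Walk v w, R.IsPath ∧
        ∀ x ∈ R.support, x ≠ v → x ≠ w → x ∉ P.support ∧ x ∉ Q.support := by
  rintro ⟨R, hR, hRPQ⟩
  have hPlong : P.IsLongestPath := ⟨hP, hPmax⟩
  have hQlong : Q.IsLongestPath := ⟨hQ, hQmax⟩
  have hPQ := hQlong.length_add_length_le huQ hvP hvQ hwQ hwP hPuv hPuvSub hPuvInt hQuw hQuwSub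
    hR hRPQ
  have hQP := hPlong.length_add_length_le huP hwQ hwP hvP hvQ hQuw hQuwSub hQuwInt hPuv hPuvSub
    hR.reverse fun x hx hxw hxv ↦ (hRPQ x (by simpa using hx) hxv hxw).symm
  rw [R.length_reverse] at hQP
  have hR₀ : R.length = 0 := by omega
  exact hvQ (SimpleGraph.Walk.eq_of_length_eq_zero hR₀ ▸ hwQ)
end

section
/- For every positive integer k there exist infinitely many graphs G such that G is k-connected and G contains two longest paths whose intersection has exactly k vertices. More precisely, for every positive integer ℓ there exists a k-connected graph on k + 2ℓ(k+1) vertices containing two longest paths that intersect in exactly k vertices. -/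
open Finset

namespace SimpleGraph

variable {V : Type*} {G : SimpleGraph V}

-- A vertex outside `s` is always followed by one in `s`; the `+ 1` pays for starting outside `s`.
lemma Walk.length_support_le_of_isVertexCover [DecidableEq V] {s : Finset V}
    (hs : G.IsVertexCover s) : ∀ {u v : V} (p : G.Walk u v),
      p.support.length ≤ 2 * p.support.countP (· ∈ s) + if u ∈ s then 0 else 1
  | u, _, .nil => by by_cases hu : u ∈ s <;> simp [hu]
  | u, _, .cons h p => by
    have ih := length_support_le_of_isVertexCover hs p
    by_cases hu : u ∈ s
    · simp only [support_cons, List.length_cons, List.countP_cons, hu, decide_true,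
        if_true] at ih ⊢
      split_ifs at ih <;> omega
    · have hw : _ ∈ s := (hs h).resolve_left hu
      simp only [support_cons, List.length_cons, List.countP_cons, hu, hw, decide_false,
        if_true, if_false] at ih ⊢
      omega

theorem Walk.IsPath.length_le_two_mul_card [DecidableEq V] {s : Finset V}
    (hs : G.IsVertexCover s) {u v : V} {p : G.Walk u v} (hp : p.IsPath) :
    p.length ≤ 2 * #s := by
  have hcover := p.length_support_le_of_isVertexCover hs
  have hin : p.support.countP (· ∈ s) ≤ #s := by
    rw [List.countP_eq_length_filter, ← List.toFinset_card_of_nodup (hp.support_nodup.filter _)]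
    exact card_le_card fun x hx => by simpa using (List.mem_filter.1 (List.mem_toFinset.1 hx)).2
  rw [p.length_support] at hcover
  split_ifs at hcover <;> omega

lemma connected_induce_of_forall_adj {s : Set V} {w : V} (hw : w ∈ s)
    (hadj : ∀ v ∈ s, v ≠ w → G.Adj w v) : (G.induce s).Connected := by
  rw [connected_iff_exists_forall_reachable]
  refine ⟨⟨w, hw⟩, fun v => ?_⟩
  by_cases hv : v = ⟨w, hw⟩
  · rw [hv]
  · exact Adj.reachable (by simpa using hadj v v.2 fun h => hv (Subtype.ext h))

end SimpleGraph

open SimpleGraph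

lemma exists_disjoint_finsets_card_eq {α : Type*} [Fintype α] {n : ℕ}
    (h : 2 * n ≤ Fintype.card α) : ∃ s t : Finset α, Disjoint s t ∧ #s = n ∧ #t = n := by
  classical
  obtain ⟨u, -, hu⟩ := exists_subset_card_eq (s := (univ : Finset α)) (by simpa using h)
  obtain ⟨s, hsu, hs⟩ := exists_subset_card_eq (s := u) (n := n) (by omega)
  exact ⟨s, u \ s, disjoint_sdiff, hs, by rw [card_sdiff_of_subset hsu]; omega⟩

lemma kConnected_of_forall_adj {V : Type*} [Fintype V] {G : SimpleGraph V} {k : ℕ} (U : Finset V)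
    (hU : k ≤ #U) (hadj : ∀ u ∈ U, ∀ v, v ≠ u → G.Adj u v) (hk : k < Fintype.card V) :
    KConnected G k := by
  refine ⟨hk, fun S hS => ?_⟩
  obtain ⟨u, huU, huS⟩ : ∃ u ∈ U, u ∉ S := by
    by_contra! hUS
    have := Set.ncard_le_ncard (s := (U : Set V)) hUS
    rw [Set.ncard_coe_finset] at this
    omega
  exact connected_induce_of_forall_adj huS fun v _ => hadj u huU v

/-- The complete split graph: a clique on `α` completely joined to an independent set on `β`. -/
def completeSplitGraph (α β : Type*) : SimpleGraph (α ⊕ β) := fromRel fun x _ => x.isLeft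

section completeSplitGraph

variable {α β : Type*}

@[simp]
lemma completeSplitGraph_adj {x y : α ⊕ β} :
    (completeSplitGraph α β).Adj x y ↔ x ≠ y ∧ (x.isLeft ∨ y.isLeft) := by
  simp [completeSplitGraph]

lemma completeSplitGraph_adj_inl {a : α} {x : α ⊕ β} :
    (completeSplitGraph α β).Adj (.inl a) x ↔ .inl a ≠ x := by
  simp

lemma completeSplitGraph_isVertexCover :
    (completeSplitGraph α β).IsVertexCover (Set.range Sum.inl) := by
  rintro (x | x) (y | y) <;> simp

lemma completeSplitGraph_kConnected [Fintype α] [Fintype β] [Nonempty β] :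
    KConnected (completeSplitGraph α β) (Fintype.card α) :=
  kConnected_of_forall_adj (univ.map .inl) (by simp)
    (fun _ hu _ hv => by
      obtain ⟨a, -, rfl⟩ := mem_map.1 hu
      exact completeSplitGraph_adj_inl.2 hv.symm)
    (by simp [Fintype.card_pos])

lemma completeSplitGraph_length_le [Fintype α] {u v : α ⊕ β}
    {p : (completeSplitGraph α β).Walk u v} (hp : p.IsPath) : p.length ≤ 2 * Fintype.card α := by
  classical
  simpa using hp.length_le_two_mul_card (s := univ.map .inl)
    (by simpa using completeSplitGraph_isVertexCover)

lemma completeSplitGraph_exists_isPath (A : Finset α) (B : Finset β) (hB : #B = #A + 1) :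
    ∃ (u v : α ⊕ β) (p : (completeSplitGraph α β).Walk u v),
      p.IsPath ∧ p.length = 2 * #A ∧ {x | x ∈ p.support} = Sum.inl '' A ∪ Sum.inr '' B := by
  classical
  induction A using Finset.cons_induction generalizing B with
  | empty =>
    obtain ⟨b, rfl⟩ := card_eq_one.1 hB
    exact ⟨_, _, .nil (u := .inr b), .nil, rfl, by ext; simp⟩
  | cons a A ha ih =>
    obtain ⟨b, hb⟩ : B.Nonempty := card_pos.1 (by omega)
    obtain ⟨u, v, p, hp, hlen, hsupp⟩ := ih (B.erase b) 
      (by rw [card_erase_of_mem hb, hB, card_cons]; rfl)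
    have hmem (x : α ⊕ β) : x ∈ p.support ↔ x ∈ Sum.inl '' A ∪ Sum.inr '' (B.erase b) := by
      rw [← hsupp]; rfl
    have ha' : .inl a ∉ p.support := by simp [hmem, ha]
    have hb' : .inr b ∉ p.support := by simp [hmem]
    have hau : (completeSplitGraph α β).Adj (.inl a) u :=
      completeSplitGraph_adj_inl.2 fun h => ha' (h ▸ p.start_mem_support)
    refine ⟨_, _, .cons (by simp : (completeSplitGraph α β).Adj (.inr b) (.inl a)) (.cons hau p),
      (hp.cons ha').cons (by simp [hb']), by simp [hlen, card_insert_of_notMem ha]; ring, ?_⟩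
    ext (x | x)
    · simp [hmem]
    · by_cases hx : x = b <;> simp [hmem, hx, hb]

end completeSplitGraph

theorem stmt_9_general (k : ℕ) (ℓ : ℕ) (hℓ : 0 < ℓ) :
    ∃ (V : Type) (_ : Fintype V) (G : SimpleGraph V),
      Fintype.card V = k + 2 * ℓ * (k + 1) ∧
      KConnected G k ∧
      ∃ (p₁ p₂ q₁ q₂ : V) (P : G.Walk p₁ p₂) (Q : G.Walk q₁ q₂),
        P.IsPath ∧ Q.IsPath ∧
        (∀ (u v : V) (W : G.Walk u v), W.IsPath → W.length ≤ P.length) ∧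
        (∀ (u v : V) (W : G.Walk u v), W.IsPath → W.length ≤ Q.length) ∧
        ({x | x ∈ P.support} ∩ {x | x ∈ Q.support}).ncard = k := by
  set m := 2 * ℓ * (k + 1)
  have hm : 2 * (k + 1) ≤ m := Nat.mul_le_mul_right _ (by omega)
  have : Nonempty (Fin m) := ⟨⟨0, by omega⟩⟩
  obtain ⟨B₁, B₂, hB, hB₁, hB₂⟩ := exists_disjoint_finsets_card_eq (α := Fin m) (n := k + 1)
    (by simpa using hm)
  obtain ⟨p₁, p₂, P, hP, hPlen, hPsupp⟩ :=
    completeSplitGraph_exists_isPath (univ : Finset (Fin k)) B₁ (by simpa using hB₁)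
  obtain ⟨q₁, q₂, Q, hQ, hQlen, hQsupp⟩ :=
    completeSplitGraph_exists_isPath (univ : Finset (Fin k)) B₂ (by simpa using hB₂)
  refine ⟨Fin k ⊕ Fin m, inferInstance, completeSplitGraph _ _, by simp,
    by simpa using completeSplitGraph_kConnected (α := Fin k) (β := Fin m),
    p₁, p₂, q₁, q₂, P, Q, hP, hQ,
    fun _ _ W hW => by simpa [hPlen] using completeSplitGraph_length_le hW,
    fun _ _ W hW => by simpa [hQlen] using completeSplitGraph_length_le hW, ?_⟩
  have hB' : Sum.inr '' (B₁ : Set (Fin m)) ∩ Sum.inr '' B₂ = (∅ : Set (Fin k ⊕ Fin m)) :=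
    ((Set.disjoint_image_iff Sum.inr_injective).2 (disjoint_coe.2 hB)).inter_eq
  rw [hPsupp, hQsupp, ← Set.union_inter_distrib_left, hB', Set.union_empty,
    Set.ncard_image_of_injective _ Sum.inl_injective, Set.ncard_coe_finset, card_univ,
    Fintype.card_fin]

/-- For every positive integer `k` there exist infinitely many graphs that are
`k`-connected and contain two longest paths whose intersection has exactly `k` vertices:
for every positive integer `ℓ` there is such a `k`-connected graph on `k + 2ℓ(k+1)`
vertices. -/
theorem stmt_9 (k : ℕ) (hk : 0 < k) (ℓ : ℕ) (hℓ : 0 < ℓ) :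
    ∃ (V : Type) (_ : Fintype V) (G : SimpleGraph V),
      Fintype.card V = k + 2 * ℓ * (k + 1) ∧
      KConnected G k ∧
      ∃ (p₁ p₂ q₁ q₂ : V) (P : G.Walk p₁ p₂) (Q : G.Walk q₁ q₂),
        P.IsPath ∧ Q.IsPath ∧
        (∀ (u v : V) (W : G.Walk u v), W.IsPath → W.length ≤ P.length) ∧
        (∀ (u v : V) (W : G.Walk u v), W.IsPath → W.length ≤ Q.length) ∧
        ({x | x ∈ P.support} ∩ {x | x ∈ Q.support}).ncard = k :=
  stmt_9_general k ℓ hℓ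
end

section
/- For positive integers k and ℓ, let G be the graph whose vertex set is S ∪ X_1 ∪ ⋯ ∪ X_{k+1} ∪ Y_1 ∪ ⋯ ∪ Y_{k+1}, where S = {s_1,…,s_k}, X_i = {a_{i1},…,a_{iℓ}} and Y_i = {b_{i1},…,b_{iℓ}} are pairwise disjoint sets, and whose edges are: every vertex of S is adjacent to every vertex outside S, together with the edges a_{ij}a_{i(j+1)} and b_{ij}b_{i(j+1)} for all i ∈ {1,…,k+1} and j ∈ {1,…,ℓ−1}. Then every path in G has at most k + ℓ(k+1) vertices. -/
/-- Vertex set of the tight example: `S = Fin k` (the vertices `s_1, …, s_k`),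
the sets `X_i` (vertices `a_{ij}`, encoded `Sum.inr (Sum.inl (i, j))`) and
the sets `Y_i` (vertices `b_{ij}`, encoded `Sum.inr (Sum.inr (i, j))`),
for `i ∈ Fin (k+1)` and `j ∈ Fin ℓ`. -/
abbrev TightVertex (k ℓ : ℕ) : Type :=
  Fin k ⊕ (Fin (k + 1) × Fin ℓ) ⊕ (Fin (k + 1) × Fin ℓ)

/-- Base relation: every vertex of `S` is related to every vertex outside `S`, and
consecutive vertices `a_{ij} a_{i(j+1)}` and `b_{ij} b_{i(j+1)}` are related. -/
def tightRel (k ℓ : ℕ) : TightVertex k ℓ → TightVertex k ℓ → Prop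
  | Sum.inl _, Sum.inr _ => True
  | Sum.inr (Sum.inl (i, j)), Sum.inr (Sum.inl (i', j')) =>
      i = i' ∧ (j : ℕ) + 1 = (j' : ℕ)
  | Sum.inr (Sum.inr (i, j)), Sum.inr (Sum.inr (i', j')) =>
      i = i' ∧ (j : ℕ) + 1 = (j' : ℕ)
  | _, _ => False

/-- The tight example graph: the symmetrization of `tightRel`. -/
def TightGraph (k ℓ : ℕ) : SimpleGraph (TightVertex k ℓ) :=
  SimpleGraph.fromRel (tightRel k ℓ)

/-- segment vertex constructor -/
def tmk (k ℓ : ℕ) (σ : Bool × Fin (k+1)) (j : Fin ℓ) : TightVertex k ℓ :=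
  match σ.1 with
  | true => Sum.inr (Sum.inl (σ.2, j))
  | false => Sum.inr (Sum.inr (σ.2, j))

lemma tmk_isLeft (k ℓ : ℕ) (σ : Bool × Fin (k+1)) (j : Fin ℓ) :
    (tmk k ℓ σ j).isLeft = false := by
  rcases σ with ⟨b, i⟩; cases b <;> rfl

lemma tmk_inj (k ℓ : ℕ) (σ : Bool × Fin (k+1)) (j j' : Fin ℓ)
    (h : tmk k ℓ σ j = tmk k ℓ σ j') : j = j' := by
  rcases σ with ⟨b, i⟩; cases b <;> simpa [tmk] using h

lemma vertex_cases (k ℓ : ℕ) (u : TightVertex k ℓ) :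
    (∃ s, u = Sum.inl s) ∨ ∃ σ j, u = tmk k ℓ σ j := by
  rcases u with s | ⟨i, j⟩ | ⟨i, j⟩
  · exact Or.inl ⟨s, rfl⟩
  · exact Or.inr ⟨(true, i), j, rfl⟩
  · exact Or.inr ⟨(false, i), j, rfl⟩

lemma not_adj_inl (k ℓ : ℕ) (s s' : Fin k) :
    ¬ (TightGraph k ℓ).Adj (Sum.inl s) (Sum.inl s') := by
  intro h
  rw [TightGraph, SimpleGraph.fromRel_adj] at h
  rcases h with ⟨-, h | h⟩ <;> exact h

lemma adj_tmk (k ℓ : ℕ) (σ σ' : Bool × Fin (k+1)) (j j' : Fin ℓ)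
    (h : (TightGraph k ℓ).Adj (tmk k ℓ σ j) (tmk k ℓ σ' j')) :
    σ = σ' ∧ j ≠ j' := by
  rw [TightGraph, SimpleGraph.fromRel_adj] at h
  rcases h with ⟨hne, h⟩
  rcases σ with ⟨b, i⟩; rcases σ' with ⟨b', i'⟩
  cases b <;> cases b' <;>
    simp only [tmk, tightRel] at h hne <;>
    first
      | (exfalso; rcases h with h | h <;> exact h)
      | (rcases h with ⟨hi, -⟩ | ⟨hi, -⟩ <;>
          exact ⟨by simp [hi], fun hj => hne (by simp [hi, hj])⟩)

lemma countP_cons_inl (k ℓ : ℕ) (s : Fin k) (L : List (TightVertex k ℓ)) :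
    (Sum.inl s :: L).countP (fun x => x.isLeft) = L.countP (fun x => x.isLeft) + 1 := by
  simp [List.countP_cons]

lemma countP_cons_tmk (k ℓ : ℕ) (σ : Bool × Fin (k+1)) (j : Fin ℓ)
    (L : List (TightVertex k ℓ)) :
    (tmk k ℓ σ j :: L).countP (fun x => x.isLeft) = L.countP (fun x => x.isLeft) := by
  simp [List.countP_cons, tmk_isLeft]

lemma card_lt_of_notMem {ℓ : ℕ} (F : Finset (Fin ℓ)) (j : Fin ℓ) (hj : j ∉ F) :
    F.card < ℓ := by
  have : F ⊂ Finset.univ := Finset.ssubset_univ_iff.mpr (by rintro rfl; exact hj (Finset.mem_univ j))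
  simpa using Finset.card_lt_card this

lemma aux (k ℓ : ℕ) (hℓ : 0 < ℓ) {u v : TightVertex k ℓ}
    (P : (TightGraph k ℓ).Walk u v) :
    P.IsPath →
    (∀ s : Fin k, u = Sum.inl s →
       P.support.length ≤ P.support.countP (fun x => x.isLeft) * (ℓ + 1)) ∧
    (∀ (σ : Bool × Fin (k+1)) (j : Fin ℓ), u = tmk k ℓ σ j →
       ∀ F : Finset (Fin ℓ), j ∉ F → (∀ j' ∈ F, tmk k ℓ σ j' ∉ P.support) →
       P.support.length ≤ P.support.countP (fun x => x.isLeft) * (ℓ + 1) + (ℓ - F.card)) := by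
  induction P with
  | nil =>
    intro _
    constructor
    · rintro s rfl
      show 1 ≤ ([Sum.inl s] : List (TightVertex k ℓ)).countP (fun x => x.isLeft) * (ℓ + 1)
      rw [show ([Sum.inl s] : List (TightVertex k ℓ)) = Sum.inl s :: [] from rfl,
        countP_cons_inl]
      simp
    · rintro σ j rfl F hjF hF
      have hcard := card_lt_of_notMem F j hjF
      show 1 ≤ _
      omega
  | cons h p ih =>
    rename_i a b c
    intro hP
    rw [SimpleGraph.Walk.cons_isPath_iff] at hP
    obtain ⟨hp, hans⟩ := hP
    obtain ⟨ih1, ih2⟩ := ih hp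
    constructor
    · rintro s rfl
      rcases vertex_cases k ℓ b with ⟨s', rfl⟩ | ⟨σ, j, rfl⟩
      · exact absurd h (not_adj_inl k ℓ s s')
      · have := ih2 σ j rfl ∅ (by simp) (by simp)
        simp only [Finset.card_empty, Nat.sub_zero] at this
        simp only [SimpleGraph.Walk.support_cons, List.length_cons, countP_cons_inl]
        set c1 := p.support.countP (fun x => x.isLeft)
        have : p.support.length ≤ c1 * (ℓ + 1) + ℓ := this
        have e : (c1 + 1) * (ℓ + 1) = c1 * (ℓ+1) + ℓ + 1 := by ring
        omega
    · rintro σ j rfl F hjF hF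
      have hcardF := card_lt_of_notMem F j hjF
      rcases vertex_cases k ℓ b with ⟨s', rfl⟩ | ⟨σ', j', rfl⟩
      · have := ih1 s' rfl
        simp only [SimpleGraph.Walk.support_cons, List.length_cons, countP_cons_tmk]
        omega
      · obtain ⟨rfl, hjj'⟩ := adj_tmk k ℓ σ σ' j j' h
        have hj'F : j' ∉ F := by
          intro hmem
          exact hF j' hmem (by simp [SimpleGraph.Walk.support_cons, p.start_mem_support])
        have hins : j' ∉ insert j F := by simp [hjj'.symm, hj'F]
        have := ih2 σ j' rfl (insert j F) hins ?_
        · have hcard' : (insert j F).card = F.card + 1 := Finset.card_insert_of_notMem hjF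
          have hlt : F.card + 1 < ℓ := by
            have := card_lt_of_notMem (insert j F) j' hins
            omega
          rw [hcard'] at this
          simp only [SimpleGraph.Walk.support_cons, List.length_cons, countP_cons_tmk]
          omega
        · intro j'' hj''
          rcases Finset.mem_insert.mp hj'' with rfl | hj''F
          · exact hans
          · intro hmem
            exact hF j'' hj''F (by simp [SimpleGraph.Walk.support_cons, hmem])

lemma count_le (k ℓ : ℕ) {u v : TightVertex k ℓ}
    (P : (TightGraph k ℓ).Walk u v) (hP : P.IsPath) :
    P.support.countP (fun x => x.isLeft) ≤ k := by
  have hnd : P.support.Nodup := hP.support_nodup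
  rw [List.countP_eq_length_filter]
  have hnd' : (P.support.filter (fun x => x.isLeft)).Nodup := hnd.filter _
  rw [← List.toFinset_card_of_nodup hnd']
  have hsub : (P.support.filter (fun x => x.isLeft)).toFinset ⊆
      Finset.univ.image (Sum.inl : Fin k → TightVertex k ℓ) := by
    intro x hx
    rw [List.mem_toFinset, List.mem_filter] at hx
    rcases x with s | z
    · simp
    · simp at hx
  calc (P.support.filter (fun x => x.isLeft)).toFinset.card
      ≤ (Finset.univ.image (Sum.inl : Fin k → TightVertex k ℓ)).card := Finset.card_le_card hsub
    _ ≤ (Finset.univ : Finset (Fin k)).card := Finset.card_image_le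
    _ = k := by simp

/-- Every path in the tight example graph has at most `k + ℓ(k+1)`
vertices. -/
theorem stmt_10 (k ℓ : ℕ) (hk : 0 < k) (hℓ : 0 < ℓ)
    (u v : TightVertex k ℓ) (P : (TightGraph k ℓ).Walk u v) (hP : P.IsPath) :
    P.support.length ≤ k + ℓ * (k + 1) := by
  have hcnt := count_le k ℓ P hP
  obtain ⟨h1, h2⟩ := aux k ℓ hℓ P hP
  set c := P.support.countP (fun x => x.isLeft) with hc
  rcases vertex_cases k ℓ u with ⟨s, rfl⟩ | ⟨σ, j, rfl⟩
  · have := h1 s rfl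
    calc P.support.length ≤ c * (ℓ + 1) := this
      _ ≤ k * (ℓ + 1) := Nat.mul_le_mul_right _ hcnt
      _ ≤ k + ℓ * (k + 1) := by nlinarith
  · have := h2 σ j rfl ∅ (by simp) (by simp)
    simp only [Finset.card_empty, Nat.sub_zero] at this
    calc P.support.length ≤ c * (ℓ + 1) + ℓ := this
      _ ≤ k * (ℓ + 1) + ℓ := by have := Nat.mul_le_mul_right (ℓ+1) hcnt; omega
      _ ≤ k + ℓ * (k + 1) := by nlinarith
end

section
/- Let G be a graph, let P be a longest path in G with extremes p_1 and p_2, let q be a vertex of G not on P, and let R be a path from q to a vertex v of P such that no vertex of R other than v lies on P. Then dist_P(p_1, v) ≥ |R| and dist_P(v, p_2) ≥ |R|, where |R| denotes the length of R. -/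
/-!
Gluing `R` to either half of `P` at `v` gives a path, because `R` meets `P` only in `v`.
Such a path is no longer than `P`, so `|R|` is at most the length of the half it replaced.
-/

open SimpleGraph Walk

namespace SimpleGraph.Walk

variable {V : Type*} {G : SimpleGraph V} {u v w : V}

lemma IsPath.append {p : G.Walk u v} {q : G.Walk v w} (hp : p.IsPath) (hq : q.IsPath)
    (h : p.support.Disjoint q.support.tail) : (p.append q).IsPath := by
  rw [isPath_def, support_append, List.nodup_append']
  exact ⟨hp.support_nodup, hq.support_nodup.tail, h⟩

lemma IsPath.append_of_forall_mem_support {p : G.Walk u v} {q : G.Walk v w}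
    (hp : p.IsPath) (hq : q.IsPath) (h : ∀ x ∈ p.support, x ∈ q.support → x = v) :
    (p.append q).IsPath := by
  refine hp.append hq fun x hxp hxq => ?_
  have hv : v ∉ q.support.tail := by
    have := hq.support_nodup
    rw [← cons_tail_support] at this
    exact (List.nodup_cons.mp this).1
  exact hv (h x hxp (List.mem_of_mem_tail hxq) ▸ hxq)

end SimpleGraph.Walk

theorem stmt_12_general {V : Type*} [DecidableEq V] {G : SimpleGraph V}
    {p₁ p₂ : V} (P : G.Walk p₁ p₂) (hP : P.IsPath)
    (hmax : ∀ (a b : V) (W : G.Walk a b), W.IsPath → W.length ≤ P.length)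
    {q v : V} (hv : v ∈ P.support)
    (R : G.Walk q v) (hR : R.IsPath)
    (hRint : ∀ x ∈ R.support, x ≠ v → x ∉ P.support) :
    R.length ≤ (P.takeUntil v hv).length ∧ R.length ≤ (P.dropUntil v hv).length := by
  have hmeet : ∀ x ∈ R.support, x ∈ P.support → x = v := fun x hx hxP =>
    by_contra fun hne => hRint x hx hne hxP
  have hsplit : (P.takeUntil v hv).length + (P.dropUntil v hv).length = P.length := by
    rw [← length_append, take_spec]
  have hviaTake := hmax _ _ _ <| hR.append_of_forall_mem_support (hP.takeUntil hv).reverse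
    fun x hx hx' => hmeet x hx <| P.support_takeUntil_subset_support hv <| by simpa using hx'
  have hviaDrop := hmax _ _ _ <| hR.append_of_forall_mem_support (hP.dropUntil hv)
    fun x hx hx' => hmeet x hx <| P.support_dropUntil_subset_support hv hx'
  rw [length_append, length_reverse] at hviaTake
  rw [length_append] at hviaDrop
  omega

/-- Let `P` be a longest path in `G` with extremes `p₁` and `p₂`, let `q` be
a vertex not on `P`, and let `R` be a path from `q` to a vertex `v` of `P` such that no
vertex of `R` other than `v` lies on `P`. Then `dist_P(p₁, v) ≥ |R|` and
`dist_P(v, p₂) ≥ |R|`.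

Here `dist_P(p₁, v)` is the length of `P.takeUntil v` (the subpath of `P` from `p₁` to
`v`) and `dist_P(v, p₂)` is the length of `P.dropUntil v` (the subpath from `v` to `p₂`). -/
theorem stmt_12 {V : Type*} [DecidableEq V] {G : SimpleGraph V}
    {p₁ p₂ : V} (P : G.Walk p₁ p₂) (hP : P.IsPath)
    (hmax : ∀ (a b : V) (W : G.Walk a b), W.IsPath → W.length ≤ P.length)
    {q v : V} (hq : q ∉ P.support) (hv : v ∈ P.support)
    (R : G.Walk q v) (hR : R.IsPath)
    (hRint : ∀ x ∈ R.support, x ≠ v → x ∉ P.support) :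
    R.length ≤ (P.takeUntil v hv).length ∧ R.length ≤ (P.dropUntil v hv).length :=
  stmt_12_general P hP hmax hv R hR hRint
end

section
/- Let Q be a longest path in a graph G with extreme q, let r be a neighbor of q lying on Q with r not adjacent to q along Q, and let q' be the vertex adjacent to r on Q that is closer to q along Q. Then the path Q' obtained from Q by adding the edge qr and removing the edge rq' is a longest path in G with extreme q', and V(Q') = V(Q). -/
/-! Split `Q` at `r` as `Q₁ · q'r · Q₂`, where `Q₁` runs from `q` to `q'`; the rotated walk is
`Q₁⁻¹ · qr · Q₂`. Its vertex list is a permutation of that of `Q`, so it is again a path, and it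
has the same length, so it is again longest. That `q'` is the predecessor of `r` is forced by
`Q` being a path: `q'` cannot occur again after `r`. -/

namespace SimpleGraph.Walk

variable {V : Type*} [DecidableEq V] {G : SimpleGraph V} {u v w x : V}

theorem IsPath.eq_of_mem_support_takeUntil_of_mem_support_dropUntil {p : G.Walk u v}
    (hp : p.IsPath) (hw : w ∈ p.support) (hxt : x ∈ (p.takeUntil w hw).support)
    (hxd : x ∈ (p.dropUntil w hw).support) : x = w := by
  have hnodup := hp.support_nodup
  rw [← p.take_spec hw, support_append] at hnodup
  rw [← cons_tail_support, List.mem_cons] at hxd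
  exact hxd.resolve_right (List.disjoint_of_nodup_append hnodup hxt)

theorem IsPath.eq_penultimate_takeUntil_of_mem_edges {p : G.Walk u v} (hp : p.IsPath)
    (hw : w ∈ p.support) (hxw : s(x, w) ∈ p.edges) (hxt : x ∈ (p.takeUntil w hw).support) :
    x = (p.takeUntil w hw).penultimate := by
  rw [← p.take_spec hw, edges_append, List.mem_append] at hxw
  rcases hxw with ht | hd
  · exact (hp.takeUntil hw).eq_penultimate_of_mem_edges (Sym2.eq_swap ▸ ht)
  · have hxw : x = w := hp.eq_of_mem_support_takeUntil_of_mem_support_dropUntil hw hxt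
      ((p.dropUntil w hw).fst_mem_support_of_mem_edges hd)
    exact absurd hxw ((p.dropUntil w hw).adj_of_mem_edges hd).ne

def posaRotation (p : G.Walk u v) (hw : w ∈ p.support) (h : G.Adj u w) :
    G.Walk (p.takeUntil w hw).penultimate v :=
  (p.takeUntil w hw).dropLast.reverse.append (cons h (p.dropUntil w hw))

theorem dropLast_takeUntil_concat_append (p : G.Walk u v) (hw : w ∈ p.support) (huw : u ≠ w) :
    ((p.takeUntil w hw).dropLast.concat (adj_penultimate (not_nil_of_ne huw))).append
      (p.dropUntil w hw) = p := by
  rw [concat_dropLast, take_spec]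

variable (p : G.Walk u v) (hw : w ∈ p.support) (h : G.Adj u w)

theorem support_posaRotation_perm : (p.posaRotation hw h).support.Perm p.support := by
  conv_rhs => rw [← p.dropLast_takeUntil_concat_append hw h.ne]
  rw [posaRotation, support_append, support_append, support_reverse, support_concat,
    support_cons, List.tail_cons, ← (p.dropUntil w hw).cons_tail_support, List.tail_cons,
    List.append_assoc, List.singleton_append]
  exact (List.reverse_perm _).append_right _

theorem length_posaRotation : (p.posaRotation hw h).length = p.length := by
  conv_rhs => rw [← p.dropLast_takeUntil_concat_append hw h.ne]
  rw [posaRotation, length_append, length_append, length_reverse, length_concat, length_cons]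
  omega

theorem IsPath.posaRotation {p : G.Walk u v} (hp : p.IsPath) (hw : w ∈ p.support)
    (h : G.Adj u w) : (p.posaRotation hw h).IsPath :=
  isPath_def _ |>.mpr <| (p.support_posaRotation_perm hw h).nodup_iff.mpr hp.support_nodup

theorem IsPath.mem_edges_posaRotation_iff {p : G.Walk u v} (hp : p.IsPath) (hw : w ∈ p.support)
    (h : G.Adj u w) {e : Sym2 V} :
    e ∈ (p.posaRotation hw h).edges ↔
      (e ∈ p.edges ∧ e ≠ s((p.takeUntil w hw).penultimate, w)) ∨ e = s(u, w) := by
  have hedges : p.edges = (p.takeUntil w hw).dropLast.edges ++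
      s((p.takeUntil w hw).penultimate, w) :: (p.dropUntil w hw).edges := by
    conv_lhs => rw [← p.dropLast_takeUntil_concat_append hw h.ne]
    rw [edges_append, edges_concat, List.concat_eq_append, List.append_assoc,
      List.singleton_append]
  have hnodup := hp.edges_nodup
  rw [hedges, List.nodup_append, List.nodup_cons] at hnodup
  rw [Walk.posaRotation, edges_append, edges_reverse, edges_cons, hedges]
  simp only [List.mem_append, List.mem_reverse, List.mem_cons]
  grind

end SimpleGraph.Walk

open SimpleGraph.Walk

theorem stmt_15_general {V : Type*} [DecidableEq V] {G : SimpleGraph V}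
    {q z : V} (Q : G.Walk q z) (hQ : Q.IsPath)
    (hQmax : ∀ (a b : V) (W : G.Walk a b), W.IsPath → W.length ≤ Q.length)
    {r : V} (hadj : G.Adj q r) (hr : r ∈ Q.support)
    {q' : V} (hq'edge : s(q', r) ∈ Q.edges)
    (hq'closer : q' ∈ (Q.takeUntil r hr).support) :
    ∃ Q' : G.Walk q' z, Q'.IsPath ∧
      (∀ (a b : V) (W : G.Walk a b), W.IsPath → W.length ≤ Q'.length) ∧
      (∀ x, x ∈ Q'.support ↔ x ∈ Q.support) ∧
      (∀ e, e ∈ Q'.edges ↔ (e ∈ Q.edges ∧ e ≠ s(q', r)) ∨ e = s(q, r)) := by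
  obtain rfl := hQ.eq_penultimate_takeUntil_of_mem_edges hr hq'edge hq'closer
  refine ⟨Q.posaRotation hr hadj, hQ.posaRotation hr hadj, ?_,
    fun x => (Q.support_posaRotation_perm hr hadj).mem_iff,
    fun e => hQ.mem_edges_posaRotation_iff hr hadj⟩
  rw [length_posaRotation]
  exact hQmax

/-- Pósa's rotation: Let `Q` be a longest path in `G` with extreme `q`,
let `r` be a neighbor of `q` lying on `Q` with `r` not adjacent to `q` along `Q` (i.e.
`s(q,r)` is not an edge of `Q`), and let `q'` be the vertex adjacent to `r` on `Q` that is
closer to `q` along `Q` (i.e. `s(q',r)` is an edge of `Q` and `q'` lies on the initial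
segment of `Q` up to `r`). Then the path `Q'` obtained from `Q` by adding the edge `qr`
and removing the edge `rq'` is a longest path in `G` with extreme `q'`, and
`V(Q') = V(Q)`. -/
theorem stmt_15 {V : Type*} [DecidableEq V] {G : SimpleGraph V}
    {q z : V} (Q : G.Walk q z) (hQ : Q.IsPath)
    (hQmax : ∀ (a b : V) (W : G.Walk a b), W.IsPath → W.length ≤ Q.length)
    {r : V} (hadj : G.Adj q r) (hr : r ∈ Q.support)
    (hnotQ : s(q, r) ∉ Q.edges)
    {q' : V} (hq'edge : s(q', r) ∈ Q.edges)
    (hq'closer : q' ∈ (Q.takeUntil r hr).support) :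
    ∃ Q' : G.Walk q' z, Q'.IsPath ∧
      (∀ (a b : V) (W : G.Walk a b), W.IsPath → W.length ≤ Q'.length) ∧
      (∀ x, x ∈ Q'.support ↔ x ∈ Q.support) ∧
      (∀ e, e ∈ Q'.edges ↔ (e ∈ Q.edges ∧ e ≠ s(q', r)) ∨ e = s(q, r)) :=
  stmt_15_general Q hQ hQmax hadj hr hq'edge hq'closer
end
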